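/- arXiv:1111.6701 — 3 statements merged into one kernel-verified Lean document; each statement's English description precedes it below -/
import Mathlib

section
/- If x ∈ L²(ℝ) is band-limited (its Fourier transform vanishes outside [-Ω, Ω] for some Ω > 0) and x vanishes almost everywhere on a nondegenerate interval (q, s), then x is identically zero. -/
/-!
The inversion formula extends `x` to the entire function
`G z = (2π)⁻¹ ∫_{[-Ω, Ω]} X ω e^{iωz}`, entire because `X` is integrable on the compact band.
Being continuous, `x` vanishes everywhere on `(q, s)`, not just almost everywhere, and the identity
theorem for `G` then forces `x = 0`.
-/

open MeasureTheory Set Filter Topology Complex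

lemma norm_cexp_I_mul_mul_le {R ω : ℝ} (hω : |ω| ≤ R) (z : ℂ) :
    ‖cexp (I * ω * z)‖ ≤ Real.exp (R * ‖z‖) := by
  rw [norm_exp, Real.exp_le_exp]
  have hre : (I * ω * z).re = -(ω * z.im) := by simp [mul_re, mul_im]
  calc (I * ω * z).re ≤ |ω * z.im| := hre ▸ neg_le_abs _
    _ = |ω| * |z.im| := abs_mul _ _
    _ ≤ R * ‖z‖ := mul_le_mul hω (abs_im_le_norm z) (abs_nonneg _) ((abs_nonneg ω).trans hω)

theorem differentiable_integral_Icc_mul_cexp {R : ℝ} {X : ℝ → ℂ}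
    (hX : IntegrableOn X (Icc (-R) R)) :
    Differentiable ℂ (fun z : ℂ => ∫ ω in Icc (-R) R, X ω * cexp (I * ω * z)) := by
  intro z₀
  have hcont : ∀ z : ℂ, Continuous fun ω : ℝ => cexp (I * ω * z) := fun z => by fun_prop
  have hcont' : Continuous fun ω : ℝ => I * ω * cexp (I * ω * z₀) := by fun_prop
  have hderiv : ∀ (ω : ℝ) (z : ℂ), HasDerivAt (fun z => X ω * cexp (I * ω * z))
      (X ω * (I * ω * cexp (I * ω * z))) z := fun ω z => by
    simpa [mul_comm] using (((hasDerivAt_id z).const_mul (I * ω)).cexp).const_mul (X ω)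
  set C := R * Real.exp (R * (‖z₀‖ + 1))
  have hbound : ∀ᵐ ω ∂volume.restrict (Icc (-R) R), ∀ z ∈ Metric.ball z₀ 1,
      ‖X ω * (I * ω * cexp (I * ω * z))‖ ≤ ‖X ω‖ * C := by
    rw [ae_restrict_iff' measurableSet_Icc]
    refine .of_forall fun ω hω z hz => ?_
    have hωR : |ω| ≤ R := abs_le.mpr hω
    have hz : ‖z‖ ≤ ‖z₀‖ + 1 := by
      have := norm_le_norm_add_norm_sub' z z₀
      rw [Metric.mem_ball, dist_eq_norm] at hz
      linarith
    have hexp : ‖cexp (I * ω * z)‖ ≤ Real.exp (R * (‖z₀‖ + 1)) :=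
      (norm_cexp_I_mul_mul_le hωR z).trans
        (Real.exp_le_exp.mpr (mul_le_mul_of_nonneg_left hz ((abs_nonneg ω).trans hωR)))
    simp only [norm_mul, norm_I, one_mul, norm_real, Real.norm_eq_abs]
    gcongr
    exact mul_le_mul hωR hexp (norm_nonneg _) ((abs_nonneg ω).trans hωR)
  exact (hasDerivAt_integral_of_dominated_loc_of_deriv_le (Metric.ball_mem_nhds z₀ one_pos)
    (.of_forall fun z => hX.1.mul (hcont z).aestronglyMeasurable)
    (hX.mul_continuousOn (hcont z₀).continuousOn isCompact_Icc)
    (hX.1.mul hcont'.aestronglyMeasurable) hbound (hX.norm.mul_const C)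
    (.of_forall fun ω z _ => hderiv ω z)).2.differentiableAt

theorem Differentiable.eq_zero_of_eqOn_Ioo {f : ℂ → ℂ} (hf : Differentiable ℂ f) {q s : ℝ}
    (hqs : q < s) (h : EqOn (f ∘ ofReal) 0 (Ioo q s)) : f = 0 := by
  obtain ⟨t₀, ht₀⟩ := nonempty_Ioo.mpr hqs
  have hreal : ∃ᶠ t : ℝ in 𝓝[≠] t₀, f t = 0 :=
    (eventually_nhdsWithin_of_eventually_nhds
      (eventually_of_mem (isOpen_Ioo.mem_nhds ht₀) fun _ ht => h ht)).frequently
  have hofReal : Tendsto ((↑) : ℝ → ℂ) (𝓝[≠] t₀) (𝓝[≠] (t₀ : ℂ)) :=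
    continuous_ofReal.continuousWithinAt.tendsto_nhdsWithin
      fun _ ht => ofReal_injective.ne ht
  exact funext fun z => AnalyticOnNhd.eqOn_zero_of_preconnected_of_frequently_eq_zero
    (fun z _ => hf.analyticAt z) isPreconnected_univ (mem_univ _) (hofReal.frequently hreal)
    (mem_univ z)

theorem bandlimited_vanish_on_interval_eq_zero_general
    (Ω : ℝ) (q s : ℝ) (hqs : q < s)
    (x : ℝ → ℂ)
    (X : ℝ → ℂ) (hX : MemLp X 2 (volume : Measure ℝ))
    (hinv : ∀ t : ℝ, x t =
      (1 / (2 * Real.pi)) * ∫ ω in Icc (-Ω) Ω, X ω * Complex.exp (Complex.I * ω * t))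
    (hzero : ∀ᵐ t ∂(volume.restrict (Ioo q s)), x t = 0) :
    ∀ t : ℝ, x t = 0 := by
  set G : ℂ → ℂ := fun z => ∫ ω in Icc (-Ω) Ω, X ω * cexp (I * ω * z)
  have hXint : IntegrableOn X (Icc (-Ω) Ω) :=
    (hX.restrict _).integrable (by norm_num)
  have hG : Differentiable ℂ G := differentiable_integral_Icc_mul_cexp hXint
  have hxcont : Continuous x :=
    (continuous_const.mul (hG.continuous.comp continuous_ofReal)).congr fun t => (hinv t).symm
  have hxIoo : EqOn x 0 (Ioo q s) :=
    volume.eqOn_open_of_ae_eq hzero isOpen_Ioo hxcont.continuousOn continuousOn_const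
  have hGIoo : EqOn (G ∘ ofReal) 0 (Ioo q s) := fun t ht => by
    simpa [hinv, Real.pi_ne_zero] using hxIoo ht
  intro t
  rw [hinv]
  exact mul_eq_zero_of_right _ (congrFun (hG.eq_zero_of_eqOn_Ioo hqs hGIoo) t)

/-- If `x ∈ L²(ℝ)` is band-limited (it is the inverse Fourier transform of an `L²`
spectrum `X` vanishing outside `[-Ω, Ω]`) and `x` vanishes a.e. on a nondegenerate
interval `(q, s)`, then `x` is identically zero. -/
theorem bandlimited_vanish_on_interval_eq_zero
    (Ω : ℝ) (hΩ : 0 < Ω) (q s : ℝ) (hqs : q < s)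
    (x : ℝ → ℂ) (hx : MemLp x 2 (volume : Measure ℝ))
    (X : ℝ → ℂ) (hX : MemLp X 2 (volume : Measure ℝ))
    (hsupp : ∀ ω : ℝ, Ω < |ω| → X ω = 0)
    (hinv : ∀ t : ℝ, x t =
      (1 / (2 * Real.pi)) * ∫ ω in Icc (-Ω) Ω, X ω * Complex.exp (Complex.I * ω * t))
    (hzero : ∀ᵐ t ∂(volume.restrict (Ioo q s)), x t = 0) :
    ∀ t : ℝ, x t = 0 :=
  bandlimited_vanish_on_interval_eq_zero_general Ω q s hqs x X hX hinv hzero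
end

section
/- The restriction map Q : U_{Ω,∞} → L²(q, s) sending a spectrum X to the restriction of its inverse Fourier transform to (q, s) is linear, continuous, and injective. -/
open MeasureTheory Set

/-- The inverse Fourier transform (with the paper's normalization) of a spectrum
supported in `[-Ω, Ω]`. -/
noncomputable def invFourier (Ω : ℝ) (X : ℝ → ℂ) (t : ℝ) : ℂ :=
  (1 / (2 * Real.pi)) * ∫ ω in Icc (-Ω) Ω, X ω * Complex.exp (Complex.I * ω * t)

/-!
Up to the factor `1 / (2π)`, `Q X` is the restriction to the real line of the entire function
`F z = ∫_{-Ω}^{Ω} X ω e^{iωz} dω`. Linearity is linearity of the integral, and continuity follows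
from `|F t| ≤ ‖X‖_{L¹[-Ω, Ω]} ≤ √(2Ω) ‖X‖₂` for real `t`. For injectivity, if `Q X` vanishes on
`(q, s)` then so does `F`, hence `F = 0` by the identity theorem. The values `F (-πn/Ω)` are,
up to a constant, the Fourier coefficients of `X` on the period interval `[-Ω, Ω]`, so
Parseval's identity forces `X = 0` almost everywhere.
-/

open Complex Filter
open scoped Topology ENNReal

noncomputable def fourierLaplace (Ω : ℝ) (X : ℝ → ℂ) (z : ℂ) : ℂ :=
  ∫ ω in Icc (-Ω) Ω, X ω * exp (I * ω * z)

lemma invFourier_eq_mul_fourierLaplace (Ω : ℝ) (X : ℝ → ℂ) (t : ℝ) :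
    invFourier Ω X t = 1 / (2 * Real.pi) * fourierLaplace Ω X t :=
  rfl

section FourierLaplace

variable {Ω : ℝ} {X Y : ℝ → ℂ}

lemma integrableOn_mul_cexp (hX : IntegrableOn X (Icc (-Ω) Ω)) (z : ℂ) :
    IntegrableOn (fun ω : ℝ => X ω * exp (I * ω * z)) (Icc (-Ω) Ω) :=
  hX.mul_continuousOn (by fun_prop) isCompact_Icc

lemma invFourier_linear_combination (hX : IntegrableOn X (Icc (-Ω) Ω))
    (hY : IntegrableOn Y (Icc (-Ω) Ω)) (a b : ℂ) (t : ℝ) :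
    invFourier Ω (fun ω => a * X ω + b * Y ω) t = a * invFourier Ω X t + b * invFourier Ω Y t := by
  have hsum : fourierLaplace Ω (fun ω => a * X ω + b * Y ω) t =
      a * fourierLaplace Ω X t + b * fourierLaplace Ω Y t := by
    rw [fourierLaplace, fourierLaplace, fourierLaplace, ← integral_const_mul,
      ← integral_const_mul, ← integral_add ((integrableOn_mul_cexp hX t).const_mul a)
        ((integrableOn_mul_cexp hY t).const_mul b)]
    congr 1 with ω
    ring
  rw [invFourier_eq_mul_fourierLaplace, invFourier_eq_mul_fourierLaplace,
    invFourier_eq_mul_fourierLaplace, hsum]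
  ring

lemma invFourier_sub (hX : IntegrableOn X (Icc (-Ω) Ω)) (hY : IntegrableOn Y (Icc (-Ω) Ω))
    (t : ℝ) : invFourier Ω (X - Y) t = invFourier Ω X t - invFourier Ω Y t := by
  have h := invFourier_linear_combination hX hY 1 (-1) t
  simp only [one_mul, neg_one_mul, ← sub_eq_add_neg] at h
  exact h

lemma enorm_fourierLaplace_ofReal_le (X : ℝ → ℂ) (t : ℝ) :
    ‖fourierLaplace Ω X t‖ₑ ≤ eLpNorm X 1 (volume.restrict (Icc (-Ω) Ω)) := by
  have h_unimodular (ω : ℝ) : ‖exp (I * ω * t)‖ₑ = 1 := by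
    rw [← enorm_norm, show I * ω * t = ((ω * t : ℝ) : ℂ) * I by push_cast; ring,
      norm_exp_ofReal_mul_I, enorm_one]
  calc ‖fourierLaplace Ω X t‖ₑ
      ≤ ∫⁻ ω in Icc (-Ω) Ω, ‖X ω * exp (I * ω * t)‖ₑ := enorm_integral_le_lintegral_enorm _
    _ = eLpNorm X 1 (volume.restrict (Icc (-Ω) Ω)) := by
      simp only [eLpNorm_one_eq_lintegral_enorm, enorm_mul, h_unimodular, mul_one]

lemma norm_cexp_I_mul_le {Ω ω : ℝ} (hω : ω ∈ Icc (-Ω) Ω) (z : ℂ) :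
    ‖exp (I * ω * z)‖ ≤ Real.exp (Ω * ‖z‖) := by
  refine (norm_exp_le_exp_norm _).trans (Real.exp_le_exp.2 ?_)
  rw [norm_mul, norm_mul, norm_I, one_mul, norm_real, Real.norm_eq_abs]
  gcongr
  exact abs_le.2 hω

lemma differentiable_fourierLaplace (hX : IntegrableOn X (Icc (-Ω) Ω)) :
    Differentiable ℂ (fourierLaplace Ω X) := by
  intro z₀
  have hderiv (ω : ℝ) (z : ℂ) : HasDerivAt (fun z => X ω * exp (I * ω * z))
      (X ω * (I * ω * exp (I * ω * z))) z := by
    simpa [mul_comm] using (((hasDerivAt_id z).const_mul (I * ω)).cexp).const_mul (X ω)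
  have hbound : ∀ᵐ ω ∂volume.restrict (Icc (-Ω) Ω), ∀ z ∈ Metric.ball z₀ 1,
      ‖X ω * (I * ω * exp (I * ω * z))‖ ≤ ‖X ω‖ * (Ω * Real.exp (Ω * (‖z₀‖ + 1))) := by
    filter_upwards [ae_restrict_mem measurableSet_Icc] with ω hω z hz
    have hz' : ‖z‖ ≤ ‖z₀‖ + 1 := by
      have := norm_le_norm_add_norm_sub' z z₀
      rw [Metric.mem_ball, dist_eq_norm] at hz
      linarith
    rw [norm_mul, norm_mul, norm_mul, norm_I, one_mul, norm_real, Real.norm_eq_abs]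
    have hΩ : 0 ≤ Ω := by linarith [hω.1, hω.2]
    gcongr
    · exact abs_le.2 hω
    · exact (norm_cexp_I_mul_le hω z).trans (by gcongr)
  exact (hasDerivAt_integral_of_dominated_loc_of_deriv_le (Metric.ball_mem_nhds z₀ one_pos)
    (Eventually.of_forall fun z => (integrableOn_mul_cexp hX z).aestronglyMeasurable)
    (integrableOn_mul_cexp hX z₀) (hX.aestronglyMeasurable.mul (by fun_prop)) hbound
    (hX.norm.mul_const _) (ae_of_all _ fun ω z _ => hderiv ω z)).2.differentiableAt

lemma eLpNorm_invFourier_le (hX : AEStronglyMeasurable X volume) (q s : ℝ) :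
    eLpNorm (invFourier Ω X) 2 (volume.restrict (Ioo q s)) ≤
      ‖(1 / (2 * Real.pi) : ℂ)‖ₑ * volume (Icc (-Ω) Ω) ^ (2⁻¹ : ℝ) *
        volume (Ioo q s) ^ (2⁻¹ : ℝ) * eLpNorm X 2 volume := by
  have hL1 : eLpNorm X 1 (volume.restrict (Icc (-Ω) Ω)) ≤
      eLpNorm X 2 volume * volume (Icc (-Ω) Ω) ^ (2⁻¹ : ℝ) := by
    have h := eLpNorm_le_eLpNorm_mul_rpow_measure_univ (p := 1) (q := 2) one_le_two
      (hX.restrict (s := Icc (-Ω) Ω))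
    have hexp : 1 / (1 : ℝ≥0∞).toReal - 1 / (2 : ℝ≥0∞).toReal = 2⁻¹ := by norm_num
    rw [Measure.restrict_apply_univ, hexp] at h
    exact h.trans (by gcongr; exact Measure.restrict_le_self)
  have hsup (t : ℝ) : ‖invFourier Ω X t‖ₑ ≤
      ‖(1 / (2 * Real.pi) : ℂ)‖ₑ * (eLpNorm X 2 volume * volume (Icc (-Ω) Ω) ^ (2⁻¹ : ℝ)) := by
    rw [invFourier_eq_mul_fourierLaplace, enorm_mul]
    gcongr
    exact (enorm_fourierLaplace_ofReal_le X t).trans hL1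
  calc eLpNorm (invFourier Ω X) 2 (volume.restrict (Ioo q s))
      ≤ (‖(1 / (2 * Real.pi) : ℂ)‖ₑ * (eLpNorm X 2 volume * volume (Icc (-Ω) Ω) ^ (2⁻¹ : ℝ))) •
          volume.restrict (Ioo q s) univ ^ (2 : ℝ≥0∞).toReal⁻¹ :=
        eLpNorm_le_of_ae_enorm_bound (ae_of_all _ hsup)
    _ = _ := by
      rw [Measure.restrict_apply_univ, smul_eq_mul, ENNReal.toReal_ofNat]
      ring

lemma exists_eLpNorm_invFourier_le (Ω q s : ℝ) :
    ∃ C : ℝ, 0 ≤ C ∧ ∀ X : ℝ → ℂ, MemLp X 2 volume →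
      eLpNorm (invFourier Ω X) 2 (volume.restrict (Ioo q s)) ≤
        ENNReal.ofReal C * eLpNorm X 2 volume := by
  set K := ‖(1 / (2 * Real.pi) : ℂ)‖ₑ * volume (Icc (-Ω) Ω) ^ (2⁻¹ : ℝ) *
    volume (Ioo q s) ^ (2⁻¹ : ℝ)
  have hK : K ≠ ⊤ := by
    refine ENNReal.mul_ne_top (ENNReal.mul_ne_top enorm_ne_top ?_) ?_
    · exact ENNReal.rpow_ne_top_of_nonneg (by norm_num) measure_Icc_lt_top.ne
    · exact ENNReal.rpow_ne_top_of_nonneg (by norm_num) measure_Ioo_lt_top.ne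
  refine ⟨K.toReal, ENNReal.toReal_nonneg, fun X hX => ?_⟩
  rw [ENNReal.ofReal_toReal hK]
  exact eLpNorm_invFourier_le hX.aestronglyMeasurable q s

end FourierLaplace

lemma Differentiable.eq_zero_of_forall_mem_Ioo {F : ℂ → ℂ} (hF : Differentiable ℂ F) {q s : ℝ}
    (hqs : q < s) (h : ∀ t ∈ Ioo q s, F t = 0) : F = 0 := by
  obtain ⟨m, hm⟩ : (Ioo q s).Nonempty := nonempty_Ioo.2 hqs
  have hreal : ∃ᶠ t : ℝ in 𝓝[≠] m, F t = 0 :=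
    (eventually_nhdsWithin_of_eventually_nhds (Filter.mem_of_superset
      (isOpen_Ioo.mem_nhds hm) h)).frequently
  have hcast : Tendsto ((↑) : ℝ → ℂ) (𝓝[≠] m) (𝓝[≠] (m : ℂ)) :=
    continuous_ofReal.continuousWithinAt.tendsto_nhdsWithin fun _ ht => by simpa using ht
  have hanalytic : AnalyticOnNhd ℂ F univ := hF.differentiableOn.analyticOnNhd isOpen_univ
  funext z
  exact hanalytic.eqOn_zero_of_preconnected_of_frequently_eq_zero isPreconnected_univ
    (mem_univ _) (hcast.frequently hreal) (mem_univ z)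

lemma ae_restrict_eq_zero_of_fourierCoeffOn_eq_zero {a b : ℝ} (hab : a < b) {f : ℝ → ℂ}
    (hf : MemLp f 2 (volume.restrict (Ioc a b))) (h : ∀ n, fourierCoeffOn hab f n = 0) :
    f =ᵐ[volume.restrict (Ioc a b)] 0 := by
  have hparseval := hasSum_sq_fourierCoeffOn hab hf
  simp only [h, norm_zero, ne_eq, OfNat.ofNat_ne_zero, not_false_eq_true, zero_pow] at hparseval
  have hnorm : ∫ x in Ioc a b, ‖f x‖ ^ 2 = 0 := by
    have := hasSum_zero.unique hparseval
    rwa [eq_comm, smul_eq_mul, mul_eq_zero, inv_eq_zero, sub_eq_zero, or_iff_right hab.ne',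
      intervalIntegral.integral_of_le hab.le] at this
  rw [integral_eq_zero_iff_of_nonneg (fun _ => by positivity)
    (hf.integrable_norm_pow two_ne_zero)] at hnorm
  filter_upwards [hnorm] with x hx
  simpa using hx

lemma fourierCoeffOn_eq_fourierLaplace {Ω : ℝ} (hΩ : -Ω < Ω) (X : ℝ → ℂ) (n : ℤ) :
    fourierCoeffOn hΩ X n = 1 / (2 * Ω) * fourierLaplace Ω X (-(Real.pi * n / Ω) : ℝ) := by
  have hΩ0 : (Ω : ℂ) ≠ 0 := ofReal_ne_zero.2 (by linarith)
  rw [fourierCoeffOn_eq_integral, intervalIntegral.integral_of_le hΩ.le,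
    ← integral_Icc_eq_integral_Ioc, fourierLaplace, real_smul, sub_neg_eq_add, ← two_mul]
  congr 1
  · push_cast
    ring
  congr 1
  funext ω
  rw [fourier_coe_apply, smul_eq_mul, mul_comm]
  congr 2
  push_cast
  field_simp

lemma ae_eq_zero_of_fourierLaplace_ofReal_eq_zero {Ω : ℝ} (hΩ : 0 < Ω) {X : ℝ → ℂ}
    (hX : MemLp X 2 volume) (hsupp : ∀ ω : ℝ, Ω < |ω| → X ω = 0)
    (h : ∀ t : ℝ, fourierLaplace Ω X t = 0) : X =ᵐ[volume] 0 := by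
  have hIoc : X =ᵐ[volume.restrict (Ioc (-Ω) Ω)] 0 :=
    ae_restrict_eq_zero_of_fourierCoeffOn_eq_zero (by linarith) (hX.restrict _) fun n => by
      rw [fourierCoeffOn_eq_fourierLaplace, h, mul_zero]
  refine ae_of_ae_restrict_of_ae_restrict_compl (Icc (-Ω) Ω) ?_ ?_
  · rwa [Measure.restrict_congr_set Ioc_ae_eq_Icc] at hIoc
  · refine ae_restrict_of_forall_mem measurableSet_Icc.compl fun ω hω => hsupp ω ?_
    rwa [mem_compl_iff, mem_Icc, ← abs_le, not_le] at hω

lemma ae_eq_zero_of_invFourier_ae_eq_zero {Ω q s : ℝ} (hΩ : 0 < Ω) (hqs : q < s) {X : ℝ → ℂ}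
    (hX : MemLp X 2 volume) (hsupp : ∀ ω : ℝ, Ω < |ω| → X ω = 0)
    (h : invFourier Ω X =ᵐ[volume.restrict (Ioo q s)] 0) : X =ᵐ[volume] 0 := by
  have hF := differentiable_fourierLaplace ((hX.restrict (Icc (-Ω) Ω)).integrable one_le_two)
  have hF_ae : (fun t : ℝ => fourierLaplace Ω X t) =ᵐ[volume.restrict (Ioo q s)] 0 := by
    filter_upwards [h] with t ht
    simpa [invFourier_eq_mul_fourierLaplace, Real.pi_ne_zero] using ht
  have hF_Ioo := Measure.eqOn_Ioo_of_ae_eq volume hF_ae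
    (hF.continuous.comp continuous_ofReal).continuousOn continuousOn_const
  have hF_zero := hF.eq_zero_of_forall_mem_Ioo hqs hF_Ioo
  exact ae_eq_zero_of_fourierLaplace_ofReal_eq_zero hΩ hX hsupp fun t => congrFun hF_zero t

/-- The restriction map `Q : U_{Ω,∞} → L²(q,s)`, sending a spectrum `X` to the
restriction of its inverse Fourier transform to `(q, s)`, is linear, continuous
and injective. -/
theorem restriction_map_linear_continuous_injective
    (Ω q s : ℝ) (hΩ : 0 < Ω) (hqs : q < s) :
    -- linearity
    (∀ (a b : ℂ) (X Y : ℝ → ℂ), MemLp X 2 (volume : Measure ℝ) →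
      MemLp Y 2 (volume : Measure ℝ) →
      (∀ ω : ℝ, Ω < |ω| → X ω = 0) → (∀ ω : ℝ, Ω < |ω| → Y ω = 0) →
      ∀ t : ℝ, invFourier Ω (fun ω => a * X ω + b * Y ω) t =
        a * invFourier Ω X t + b * invFourier Ω Y t) ∧
    -- continuity : the L²(q,s)-norm of Q X is bounded by a constant times ‖X‖₂
    (∃ C : ℝ, 0 ≤ C ∧ ∀ X : ℝ → ℂ, MemLp X 2 (volume : Measure ℝ) →
      (∀ ω : ℝ, Ω < |ω| → X ω = 0) →
      eLpNorm (invFourier Ω X) 2 (volume.restrict (Ioo q s)) ≤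
        ENNReal.ofReal C * eLpNorm X 2 (volume : Measure ℝ)) ∧
    -- injectivity
    (∀ X Y : ℝ → ℂ, MemLp X 2 (volume : Measure ℝ) → MemLp Y 2 (volume : Measure ℝ) →
      (∀ ω : ℝ, Ω < |ω| → X ω = 0) → (∀ ω : ℝ, Ω < |ω| → Y ω = 0) →
      (∀ᵐ t ∂(volume.restrict (Ioo q s)), invFourier Ω X t = invFourier Ω Y t) →
      ∀ᵐ ω ∂(volume : Measure ℝ), X ω = Y ω) := by
  have integrableOn_Icc {X : ℝ → ℂ} (hX : MemLp X 2 volume) : IntegrableOn X (Icc (-Ω) Ω) :=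
    (hX.restrict _).integrable one_le_two
  refine ⟨fun a b X Y hX hY _ _ t => invFourier_linear_combination (integrableOn_Icc hX)
    (integrableOn_Icc hY) a b t, ?_, fun X Y hX hY hXs hYs hae => ?_⟩
  · obtain ⟨C, hC, hbound⟩ := exists_eLpNorm_invFourier_le Ω q s
    exact ⟨C, hC, fun X hX _ => hbound X hX⟩
  · have hsub : X - Y =ᵐ[volume] 0 := by
      refine ae_eq_zero_of_invFourier_ae_eq_zero hΩ hqs (hX.sub hY)
        (fun ω hω => by simp [hXs ω hω, hYs ω hω]) ?_
      filter_upwards [hae] with t ht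
      rw [invFourier_sub (integrableOn_Icc hX) (integrableOn_Icc hY), ht, sub_self, Pi.zero_apply]
    filter_upwards [hsub] with ω hω
    exact sub_eq_zero.1 hω
end

section
/- The functions t ↦ sinc(kπ + Ωt), for k = -N, ..., N, are linearly independent as elements of L²(q, s) for any nondegenerate interval (q, s). -/
/-!
`sinc` is the difference quotient of `sin` at `0`, hence real-analytic, so a combination of its
translates that vanishes on an interval vanishes on all of `ℝ`. At `t = -kπ/Ω` the `k`-th
translate takes the value `sinc 0 = 1` and every other one a value `sinc (nπ) = 0`, `n ≠ 0`.
-/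

open MeasureTheory Set

noncomputable def sinc (u : ℝ) : ℝ := if u = 0 then 1 else Real.sin u / u

open Filter Topology

theorem AnalyticOnNhd.dslope {𝕜 E : Type*} [NontriviallyNormedField 𝕜] [NormedAddCommGroup E]
    [NormedSpace 𝕜 E] {f : 𝕜 → E} {U : Set 𝕜} {a : 𝕜} (hf : AnalyticOnNhd 𝕜 f U) (ha : a ∈ U) :
    AnalyticOnNhd 𝕜 (dslope f a) U := by
  intro b hb
  obtain rfl | hba := eq_or_ne b a
  · obtain ⟨p, hp⟩ := hf b hb
    exact hp.has_fpower_series_dslope_fslope.analyticAt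
  · have hslope : AnalyticAt 𝕜 (fun x => (x - a)⁻¹ • (f x - f a)) b :=
      ((analyticAt_id.sub analyticAt_const).inv (sub_ne_zero.mpr hba)).smul
        ((hf b hb).sub analyticAt_const)
    exact hslope.congr (dslope_eventuallyEq_slope_of_ne f hba).symm

theorem AnalyticOnNhd.eq_zero_of_eqOn_zero_Ioo {E : Type*} [NormedAddCommGroup E]
    [NormedSpace ℝ E] {f : ℝ → E} (hf : AnalyticOnNhd ℝ f univ) {q s : ℝ} (hqs : q < s)
    (h : EqOn f 0 (Ioo q s)) : f = 0 := by
  obtain ⟨c, hc⟩ := nonempty_Ioo.mpr hqs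
  have hc_zero : f =ᶠ[𝓝 c] 0 := mem_of_superset (isOpen_Ioo.mem_nhds hc) h
  exact funext fun t => hf.eqOn_zero_of_preconnected_of_eventuallyEq_zero isPreconnected_univ
    (mem_univ c) hc_zero (mem_univ t)

theorem sinc_eq_real_sinc : sinc = Real.sinc := rfl

@[fun_prop]
theorem analyticAt_sinc (x : ℝ) : AnalyticAt ℝ sinc x := by
  rw [sinc_eq_real_sinc, Real.sinc_eq_dslope]
  exact Real.analyticOnNhd_sin.dslope (mem_univ 0) x (mem_univ x)

theorem sinc_int_mul_pi (n : ℤ) : sinc (n * Real.pi) = if n = 0 then 1 else 0 := by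
  split_ifs with hn
  · simp [sinc, hn]
  · simp [sinc, hn, Real.pi_ne_zero, Real.sin_int_mul_pi]

/-- The functions `t ↦ sinc(kπ + Ωt)`, `k = -N, …, N`, are linearly independent on
any nondegenerate interval `(q, s)`: a linear combination vanishing on `(q,s)` has
all coefficients zero. -/
theorem sinc_translates_linearly_independent
    (Ω q s : ℝ) (hΩ : 0 < Ω) (hqs : q < s) (N : ℕ)
    (y : ℤ → ℂ)
    (hy : ∀ t ∈ Ioo q s,
      (∑ k ∈ Finset.Icc (-(N : ℤ)) (N : ℤ),
        y k * (sinc (k * Real.pi + Ω * t) : ℝ)) = 0) :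
    ∀ k ∈ Finset.Icc (-(N : ℤ)) (N : ℤ), y k = 0 := by
  set f : ℝ → ℂ := fun t => ∑ k ∈ Finset.Icc (-(N : ℤ)) (N : ℤ),
    y k * (sinc (k * Real.pi + Ω * t) : ℝ)
  have hf : AnalyticOnNhd ℝ f univ := by
    intro t _
    have hofReal (x : ℝ) : AnalyticAt ℝ ((↑) : ℝ → ℂ) x := Complex.ofRealCLM.analyticAt x
    simp only [f]
    fun_prop
  have hf_zero : f = 0 := hf.eq_zero_of_eqOn_zero_Ioo hqs hy
  intro k hk
  have hnode (j : ℤ) :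
      (j : ℝ) * Real.pi + Ω * (-(k * Real.pi) / Ω) = ((j - k : ℤ) : ℝ) * Real.pi := by
    push_cast
    field_simp
    ring
  have hfk := congrFun hf_zero (-(k * Real.pi) / Ω)
  simp only [f, hnode, sinc_int_mul_pi, Pi.zero_apply] at hfk
  simpa [sub_eq_zero, hk, apply_ite Complex.ofReal] using hfk
end
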